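/- Let n ≥ 2, 0 < p < n, a = 2/(n+p), and Ω = {(x', x_n) : |x'| < 1, 0 < x_n < 1 - |x'|²}. The function w(x', x_n) = x_n - x_n^a (1 - |x'|²)^{1-a} is not Hölder continuous with any exponent α > 2/(n+p) on the closure of Ω. Specifically, for x_n sufficiently small, |w(0, x_n)| ≥ x_n^{2/(n+p)}/2, while dist((0,x_n), ∂Ω) ≤ x_n. -/
import Mathlib


open Real

/-- The Hessian determinant of a function on Euclidean space, computed via
iterated Fréchet derivatives in the standard coordinate directions. -/
noncomputable def hessDet {n : ℕ} (w : EuclideanSpace ℝ (Fin n) → ℝ)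
    (x : EuclideanSpace ℝ (Fin n)) : ℝ :=
  (Matrix.of fun i j : Fin n =>
    fderiv ℝ (fun y => fderiv ℝ w y (EuclideanSpace.single i 1)) x
      (EuclideanSpace.single j 1)).det

theorem stmt2 (n : ℕ) (hn : 2 ≤ n) (p : ℝ) (hp0 : 0 < p) (hpn : p < n)
    (a : ℝ) (ha : a = 2 / (n + p))
    (xn : EuclideanSpace ℝ (Fin n) → ℝ) (hxn : ∀ x, xn x = x ⟨n - 1, by omega⟩)
    (s : EuclideanSpace ℝ (Fin n) → ℝ) (hs : ∀ x, s x = ‖x‖ ^ 2 - (xn x) ^ 2)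
    (Ω : Set (EuclideanSpace ℝ (Fin n)))
    (hΩ : Ω = {x | s x < 1 ∧ 0 < xn x ∧ xn x < 1 - s x})
    (w : EuclideanSpace ℝ (Fin n) → ℝ)
    (hw : ∀ x, w x = xn x - (xn x) ^ a * (1 - s x) ^ (1 - a)) :
    (∀ α : ℝ, 2 / (n + p) < α →
      ¬ ∃ C : ℝ, ∀ x ∈ closure Ω, ∀ y ∈ closure Ω, |w x - w y| ≤ C * ‖x - y‖ ^ α) ∧
    ∃ ε > 0, ∀ t : ℝ, 0 < t → t < ε →
      t ^ (2 / ((n : ℝ) + p)) / 2 ≤ |w (EuclideanSpace.single ⟨n - 1, by omega⟩ t)| ∧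
      Metric.infDist (EuclideanSpace.single (⟨n - 1, by omega⟩ : Fin n) t) (frontier Ω) ≤ t := by
  have hnp2 : (2:ℝ) < (n:ℝ) + p := by
    have h2 : (2:ℝ) ≤ (n:ℝ) := by exact_mod_cast hn
    linarith
  have ha0 : 0 < a := by rw [ha]; positivity
  have ha1 : a < 1 := by rw [ha, div_lt_one (by linarith)]; linarith
  set i : Fin n := ⟨n - 1, by omega⟩ with hi
  -- basic computations
  have hsx : ∀ t : ℝ, s (EuclideanSpace.single i t) = 0 := by
    intro t
    rw [hs, hxn]
    have h1 : (EuclideanSpace.single i t : EuclideanSpace ℝ (Fin n)) i = t := by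
      simp [EuclideanSpace.single_apply]
    rw [h1, EuclideanSpace.norm_single, Real.norm_eq_abs, sq_abs, sub_self]
  have hxnx : ∀ t : ℝ, xn (EuclideanSpace.single i t) = t := by
    intro t; rw [hxn]; simp [EuclideanSpace.single_apply]
  have hwx : ∀ t : ℝ, w (EuclideanSpace.single i t) = t - t ^ a := by
    intro t
    rw [hw, hxnx, hsx, sub_zero, Real.one_rpow, mul_one]
  have hzero : (EuclideanSpace.single i (0:ℝ) : EuclideanSpace ℝ (Fin n)) = 0 := by
    ext j; simp [EuclideanSpace.single_apply]
  have hnorm : ∀ t : ℝ, ‖(EuclideanSpace.single i t : EuclideanSpace ℝ (Fin n))‖ = |t| := by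
    intro t; rw [EuclideanSpace.norm_single, Real.norm_eq_abs]
  have hw0 : w 0 = 0 := by
    rw [← hzero, hwx, Real.zero_rpow (ne_of_gt ha0), sub_zero]
  -- ε
  set ε : ℝ := min 1 ((1/2 : ℝ) ^ (1 / (1 - a))) with hε
  have hεpos : 0 < ε := lt_min one_pos (Real.rpow_pos_of_pos (by norm_num) _)
  -- key: for 0 < t < ε, t ≤ t^a / 2
  have hkey : ∀ t : ℝ, 0 < t → t < ε → t ≤ t ^ a / 2 := by
    intro t ht htε
    have ht1a : t ^ (1 - a) ≤ 1 / 2 := by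
      have hle : t ≤ (1/2 : ℝ) ^ (1 / (1 - a)) := le_of_lt (lt_of_lt_of_le htε (min_le_right _ _))
      calc t ^ (1 - a) ≤ ((1/2 : ℝ) ^ (1 / (1 - a))) ^ (1 - a) :=
            Real.rpow_le_rpow ht.le hle (by linarith)
        _ = (1/2 : ℝ) := by
            rw [← Real.rpow_mul (by norm_num : (0:ℝ) ≤ 1/2),
              one_div_mul_cancel (by linarith : (1:ℝ) - a ≠ 0), Real.rpow_one]
    have hid : t = t ^ a * t ^ (1 - a) := by
      rw [← Real.rpow_add ht, show a + (1 - a) = 1 by ring, Real.rpow_one]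
    calc t = t ^ a * t ^ (1 - a) := hid
      _ ≤ t ^ a * (1/2) := mul_le_mul_of_nonneg_left ht1a (Real.rpow_nonneg ht.le a)
      _ = t ^ a / 2 := by ring
  -- lower bound on |w|
  have habs : ∀ t : ℝ, 0 < t → t < ε → t ^ a / 2 ≤ |w (EuclideanSpace.single i t)| := by
    intro t ht htε
    have hk := hkey t ht htε
    have hta : 0 < t ^ a := Real.rpow_pos_of_pos ht a
    rw [hwx, abs_of_nonpos (by linarith)]
    linarith
  -- membership in Ω
  have hmemΩ : ∀ t : ℝ, 0 < t → t < 1 → EuclideanSpace.single i t ∈ Ω := by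
    intro t h0 h1
    rw [hΩ]
    refine ⟨?_, ?_, ?_⟩ <;> simp [hsx, hxnx, h0, h1]
  have hclos0 : (0 : EuclideanSpace ℝ (Fin n)) ∈ closure Ω := by
    rw [Metric.mem_closure_iff]
    intro r hr
    refine ⟨EuclideanSpace.single i (min (r/2) (1/2)), hmemΩ _ (by positivity)
      (lt_of_le_of_lt (min_le_right _ _) (by norm_num)), ?_⟩
    rw [dist_comm, dist_zero_right, hnorm, abs_of_pos (by positivity)]
    exact lt_of_le_of_lt (min_le_left _ _) (by linarith)
  have hfr0 : (0 : EuclideanSpace ℝ (Fin n)) ∈ frontier Ω := by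
    refine ⟨hclos0, ?_⟩
    intro h0
    have hmem : (0 : EuclideanSpace ℝ (Fin n)) ∈ Ω := interior_subset h0
    rw [hΩ] at hmem
    have h1 := hmem.2.1
    rw [hxn] at h1
    simp at h1
  constructor
  · -- non-Hölder
    intro α hα ⟨C, hC⟩
    rw [← ha] at hα
    have hb : ∀ t : ℝ, 0 < t → t < ε → t ^ a / 2 ≤ C * t ^ α := by
      intro t ht htε
      have h1 := hC (EuclideanSpace.single i t)
        (subset_closure (hmemΩ t ht (lt_of_lt_of_le htε (min_le_left _ _)))) 0 hclos0
      rw [hw0, sub_zero, sub_zero, hnorm, abs_of_pos ht] at h1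
      exact le_trans (habs t ht htε) h1
    have hC0 : 0 < C := by
      by_contra hCn
      push_neg at hCn
      have h1 := hb (ε/2) (by linarith) (by linarith)
      have h2 : 0 < (ε/2) ^ a / 2 := by positivity
      have h3 : C * (ε/2) ^ α ≤ 0 :=
        mul_nonpos_of_nonpos_of_nonneg hCn (Real.rpow_nonneg (by linarith) α)
      linarith
    set δ : ℝ := (1 / (2*C)) ^ (1 / (α - a)) with hδ
    have hδ0 : 0 < δ := Real.rpow_pos_of_pos (by positivity) _
    set t : ℝ := min (ε/2) (δ/2) with htdef
    have ht : 0 < t := lt_min (by linarith) (by linarith)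
    have htε : t < ε := lt_of_le_of_lt (min_le_left _ _) (by linarith)
    have hbt := hb t ht htε
    -- t^α = t^a * t^(α-a)
    have hsplit : t ^ α = t ^ a * t ^ (α - a) := by
      rw [← Real.rpow_add ht, show a + (α - a) = α by ring]
    have hta : 0 < t ^ a := Real.rpow_pos_of_pos ht a
    have h12 : 1/2 ≤ C * t ^ (α - a) := by
      have h2 : (1/2) * t ^ a ≤ (C * t ^ (α - a)) * t ^ a := by
        rw [hsplit] at hbt; linarith
      exact le_of_mul_le_mul_right h2 hta
    have hlt : t ^ (α - a) < 1 / (2*C) := by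
      calc t ^ (α - a) ≤ (δ/2) ^ (α - a) :=
            Real.rpow_le_rpow ht.le (min_le_right _ _) (by linarith)
        _ < δ ^ (α - a) := Real.rpow_lt_rpow (by linarith) (by linarith) (by linarith)
        _ = 1 / (2*C) := by
            rw [← Real.rpow_mul (by positivity : (0:ℝ) ≤ 1/(2*C)),
              one_div_mul_cancel (by linarith : α - a ≠ 0), Real.rpow_one]
    have hfin : C * t ^ (α - a) < 1/2 := by
      have h2C : C * (1/(2*C)) = 1/2 := by field_simp
      calc C * t ^ (α - a) < C * (1/(2*C)) := by
            exact mul_lt_mul_of_pos_left hlt hC0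
        _ = 1/2 := h2C
    linarith
  · refine ⟨ε, hεpos, fun t ht htε => ⟨?_, ?_⟩⟩
    · rw [← ha]; exact habs t ht htε
    · calc Metric.infDist (EuclideanSpace.single i t) (frontier Ω)
          ≤ dist (EuclideanSpace.single i t) 0 := Metric.infDist_le_dist_of_mem hfr0
        _ = t := by rw [dist_zero_right, hnorm, abs_of_pos ht]
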